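/- Li₂(α/√5) + Li₂(-β/√5) = π²/6 + ln²(α) - (1/4)·ln²(5), where α = (1+√5)/2 and β = (1-√5)/2. -/

import Mathlib

/-! Euler's reflection formula `Li₂ x + Li₂ (1 - x) = π²/6 - log x · log (1 - x)` holds on
`(0, 1)`: the left side plus `log x · log (1 - x)` has zero derivative there, since
`Li₂' x = -log (1 - x) / x`, and its limit at `0⁺` is `Li₂ 1 = ζ(2)`.
At `x = φ/√5` we have `1 - x = -ψ/√5 = 1/(φ√5)`, so `log x = log φ - ½ log 5` and
`log (1 - x) = -log φ - ½ log 5`. -/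

noncomputable def Li2 (x : ℝ) : ℝ := ∑' n : ℕ, x ^ (n + 1) / ((n : ℝ) + 1) ^ 2

open Real Set Filter Topology goldenRatio

lemma summable_one_div_succ_sq : Summable (fun n : ℕ => 1 / ((n : ℝ) + 1) ^ 2) := by
  simpa using (summable_nat_add_iff 1).mpr ((summable_one_div_nat_pow (p := 2)).mpr one_lt_two)

lemma li2_zero : Li2 0 = 0 := by
  simp [Li2]

lemma li2_one : Li2 1 = π ^ 2 / 6 := by
  have h := (hasSum_nat_add_iff (f := fun n : ℕ => 1 / (n : ℝ) ^ 2) 1).mpr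
    (by simpa using hasSum_zeta_two)
  simpa [Li2] using h.tsum_eq

lemma continuousOn_li2 : ContinuousOn Li2 (Icc (-1) 1) := by
  refine continuousOn_tsum (fun n => (continuous_pow (n + 1)).continuousOn.div_const _)
    summable_one_div_succ_sq fun n x hx => ?_
  rw [norm_div, norm_pow, norm_of_nonneg (by positivity : (0 : ℝ) ≤ ((n : ℝ) + 1) ^ 2)]
  gcongr
  exact pow_le_one₀ (norm_nonneg x) (abs_le.mpr hx)

lemma hasDerivAt_li2_tsum {x : ℝ} (hx : |x| < 1) :
    HasDerivAt Li2 (∑' n : ℕ, x ^ n / ((n : ℝ) + 1)) x := by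
  obtain ⟨r, hxr, hr1⟩ := exists_between hx
  have hr0 : 0 < r := (abs_nonneg x).trans_lt hxr
  refine hasDerivAt_tsum_of_isPreconnected (u := fun n => r ^ n)
    (g := fun (n : ℕ) (y : ℝ) => y ^ (n + 1) / ((n : ℝ) + 1) ^ 2)
    (g' := fun (n : ℕ) (y : ℝ) => y ^ n / ((n : ℝ) + 1)) (t := Ioo (-r) r) (y₀ := 0)
    (summable_geometric_of_lt_one hr0.le hr1) isOpen_Ioo isPreconnected_Ioo
    (fun n y _ => ?_) (fun n y hy => ?_) ⟨by linarith, hr0⟩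
    (summable_zero.congr fun n => by simp) (abs_lt.mp hxr)
  · refine ((hasDerivAt_pow (n + 1) y).div_const _).congr_deriv ?_
    rw [Nat.add_sub_cancel]
    push_cast
    field_simp
  · rw [norm_div, norm_pow, norm_of_nonneg (by positivity : (0 : ℝ) ≤ (n : ℝ) + 1)]
    calc ‖y‖ ^ n / ((n : ℝ) + 1) ≤ ‖y‖ ^ n := div_le_self (by positivity) (by simp)
      _ ≤ r ^ n := by gcongr; exact (abs_lt.mpr hy).le

lemma hasDerivAt_li2 {x : ℝ} (h0 : x ≠ 0) (h1 : |x| < 1) :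
    HasDerivAt Li2 (-log (1 - x) / x) x := by
  have hs : HasSum (fun n : ℕ => x ^ n / ((n : ℝ) + 1)) (-log (1 - x) / x) := by
    refine ((hasSum_pow_div_log_of_abs_lt_one h1).div_const x).congr_fun fun n => ?_
    rw [pow_succ]
    field_simp
  simpa [hs.tsum_eq] using hasDerivAt_li2_tsum h1

lemma tendsto_log_mul_log_one_sub_nhdsGT_zero :
    Tendsto (fun x => log x * log (1 - x)) (𝓝[>] 0) (𝓝 0) := by
  have hxlog : Tendsto (fun x => log x * x) (𝓝[>] 0) (𝓝 0) := by
    simpa using tendsto_log_mul_rpow_nhdsGT_zero one_pos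
  have hslope : Tendsto (fun x => log (1 - x) / x) (𝓝[≠] 0) (𝓝 (-1)) := by
    have hd : HasDerivAt (fun x => log (1 - x)) (-1) 0 := by
      simpa using ((hasDerivAt_id (0 : ℝ)).const_sub 1).log (by norm_num)
    simpa [slope_fun_def_field] using hasDerivAt_iff_tendsto_slope.mp hd
  have hprod := hxlog.mul (hslope.mono_left (nhdsWithin_mono _ fun x hx => ne_of_gt hx))
  rw [zero_mul] at hprod
  refine hprod.congr' (eventually_mem_nhdsWithin.mono fun x hx => ?_)
  have hx0 : x ≠ 0 := ne_of_gt hx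
  field_simp

lemma exists_li2_add_li2_one_sub_add_log_mul_log_eq :
    ∃ c, ∀ x ∈ Ioo (0 : ℝ) 1, Li2 x + Li2 (1 - x) + log x * log (1 - x) = c := by
  have hderiv : ∀ x ∈ Ioo (0 : ℝ) 1,
      HasDerivAt (fun x => Li2 x + Li2 (1 - x) + log x * log (1 - x)) 0 x := by
    rintro x ⟨hx0, hx1⟩
    have hsub : HasDerivAt (fun y : ℝ => 1 - y) (-1) x := by
      simpa using (hasDerivAt_id x).const_sub 1
    have hLi2 := hasDerivAt_li2 hx0.ne' (abs_lt.mpr ⟨by linarith, hx1⟩)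
    have hLi2' : HasDerivAt (fun y => Li2 (1 - y)) _ x :=
      (hasDerivAt_li2 (x := 1 - x) (by linarith)
        (abs_lt.mpr ⟨by linarith, by linarith⟩)).comp x hsub
    have hlog : HasDerivAt (fun y => log y * log (1 - y)) _ x :=
      (hasDerivAt_log hx0.ne').mul (hsub.log (by linarith))
    refine ((hLi2.add hLi2').add hlog).congr_deriv ?_
    have : 1 - x ≠ 0 := by linarith
    rw [sub_sub_cancel]
    field_simp
    ring
  exact isOpen_Ioo.exists_is_const_of_deriv_eq_zero isPreconnected_Ioo
    (fun x hx => (hderiv x hx).differentiableAt.differentiableWithinAt)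
    (fun x hx => (hderiv x hx).deriv)

lemma tendsto_li2_add_li2_one_sub_add_log_mul_log_nhdsGT_zero :
    Tendsto (fun x => Li2 x + Li2 (1 - x) + log x * log (1 - x)) (𝓝[>] 0)
      (𝓝 (π ^ 2 / 6)) := by
  have hLi2 : Tendsto Li2 (𝓝[>] 0) (𝓝 0) := by
    have h := continuousOn_li2.continuousAt
      (Icc_mem_nhds (by norm_num : (-1 : ℝ) < 0) (by norm_num : (0 : ℝ) < 1))
    simpa [li2_zero] using h.tendsto.mono_left nhdsWithin_le_nhds
  have hLi2' : Tendsto (fun x => Li2 (1 - x)) (𝓝[>] 0) (𝓝 (π ^ 2 / 6)) := by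
    have hmaps : MapsTo (fun x : ℝ => 1 - x) (Ioo 0 2) (Icc (-1) 1) :=
      fun x hx => ⟨by linarith [hx.2], by linarith [hx.1]⟩
    have h := ((continuousOn_li2 (1 - 0) (by norm_num)).comp
      (continuous_const.sub continuous_id).continuousWithinAt hmaps).tendsto
    rw [nhdsWithin_Ioo_eq_nhdsGT two_pos] at h
    simpa only [Function.comp_def, sub_zero, li2_one] using h
  simpa using (hLi2.add hLi2').add tendsto_log_mul_log_one_sub_nhdsGT_zero

theorem li2_add_li2_one_sub {x : ℝ} (hx : x ∈ Ioo (0 : ℝ) 1) :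
    Li2 x + Li2 (1 - x) = π ^ 2 / 6 - log x * log (1 - x) := by
  obtain ⟨c, hc⟩ := exists_li2_add_li2_one_sub_add_log_mul_log_eq
  have hlim : Tendsto (fun _ : ℝ => c) (𝓝[>] 0) (𝓝 (π ^ 2 / 6)) :=
    tendsto_li2_add_li2_one_sub_add_log_mul_log_nhdsGT_zero.congr'
      (eventually_of_mem (Ioo_mem_nhdsGT one_pos) hc)
  rw [← tendsto_nhds_unique tendsto_const_nhds hlim, ← hc x hx]
  ring

theorem stmt_17 :
    Li2 ((1 + Real.sqrt 5) / 2 / Real.sqrt 5) + Li2 (-((1 - Real.sqrt 5) / 2) / Real.sqrt 5) =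
      Real.pi ^ 2 / 6 + Real.log ((1 + Real.sqrt 5) / 2) ^ 2 - (1 / 4) * Real.log 5 ^ 2 := by
  change Li2 (φ / √5) + Li2 (-ψ / √5) = π ^ 2 / 6 + log φ ^ 2 - 1 / 4 * log 5 ^ 2
  have hsqrt5 : 1 < √5 := by rw [lt_sqrt zero_le_one]; norm_num
  have hx : φ / √5 ∈ Ioo 0 1 :=
    ⟨by positivity, (div_lt_one (by positivity)).mpr (by rw [goldenRatio]; linarith)⟩
  have hconj : -ψ / √5 = 1 - φ / √5 := by
    rw [eq_sub_iff_add_eq, ← add_div, neg_add_eq_sub, goldenRatio_sub_goldenConj,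
      div_self (by positivity)]
  have hlog : log (φ / √5) = log φ - log 5 / 2 := by
    rw [log_div goldenRatio_ne_zero (by positivity), log_sqrt (by norm_num)]
  have hlog' : log (1 - φ / √5) = -log φ - log 5 / 2 := by
    rw [← hconj, ← inv_goldenRatio, log_div (inv_ne_zero goldenRatio_ne_zero) (by positivity),
      log_inv, log_sqrt (by norm_num)]
  rw [hconj, li2_add_li2_one_sub hx, hlog, hlog']
  ring
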